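/- arXiv:0812.2659 — 4 statements merged into one kernel-verified Lean document; each statement's English description precedes it below -/
import Mathlib

section
/- Let E be a finite-dimensional real inner product space and let V, W be subspaces of E with orthogonal projections pr_V, pr_W. Then 0 ≤ tr(pr_V ∘ pr_W) ≤ min(dim V, dim W). -/
/-!
Since `proj W` is idempotent, `tr (proj V ∘ proj W) = tr (proj W ∘ proj V ∘ proj W)`, the trace of a
positive operator, hence nonnegative. As `proj V + proj Vᗮ = id`, the traces for `V` and `Vᗮ` add up
to `tr (proj W) = dim W`, so each is at most `dim W`; cyclicity of the trace gives the bound by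
`dim V`.
-/

noncomputable def proj {E : Type*} [NormedAddCommGroup E] [InnerProductSpace ℝ E]
    (V : Submodule ℝ E) [V.HasOrthogonalProjection] : E →ₗ[ℝ] E :=
  V.subtype ∘ₗ V.orthogonalProjectionOnto.toLinearMap

namespace Submodule

variable {E : Type*} [NormedAddCommGroup E] [InnerProductSpace ℝ E]

theorem isSymmetricProjection_proj (V : Submodule ℝ E) [V.HasOrthogonalProjection] :
    (proj V).IsSymmetricProjection :=
  isSymmetricProjection_starProjection V

theorem proj_add_proj_orthogonal (V : Submodule ℝ E) [V.HasOrthogonalProjection] :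
    proj V + proj Vᗮ = LinearMap.id :=
  LinearMap.ext V.starProjection_add_starProjection_orthogonal

variable [FiniteDimensional ℝ E]

theorem trace_proj (V : Submodule ℝ E) :
    LinearMap.trace ℝ E (proj V) = Module.finrank ℝ V := by
  have hid : V.orthogonalProjectionOnto.toLinearMap ∘ₗ V.subtype = LinearMap.id :=
    LinearMap.ext fun v ↦ V.orthogonalProjectionOnto_mem_subspace_eq_self v
  rw [proj, LinearMap.trace_comp_comm', hid, LinearMap.trace_id]

theorem trace_proj_comp_proj_nonneg (V W : Submodule ℝ E) :
    0 ≤ LinearMap.trace ℝ E (proj V ∘ₗ proj W) := by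
  have hW := W.isSymmetricProjection_proj
  have hconj : LinearMap.trace ℝ E (proj V ∘ₗ proj W) =
      LinearMap.trace ℝ E (proj W ∘ₗ proj V ∘ₗ proj W) := by
    conv_lhs => rw [← hW.isIdempotentElem.eq, Module.End.mul_eq_comp, ← LinearMap.comp_assoc]
    exact LinearMap.trace_comp_comm' (proj W) (proj V ∘ₗ proj W)
  have hpos : (proj W ∘ₗ proj V ∘ₗ proj W).IsPositive := by
    simpa [hW.isSymmetric.adjoint_eq] using
      V.isSymmetricProjection_proj.isPositive.conj_adjoint (proj W)
  exact hconj ▸ hpos.trace_nonneg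

theorem trace_proj_comp_proj_le_finrank (V W : Submodule ℝ E) :
    LinearMap.trace ℝ E (proj V ∘ₗ proj W) ≤ Module.finrank ℝ W := by
  have hsplit : LinearMap.trace ℝ E (proj V ∘ₗ proj W) + LinearMap.trace ℝ E (proj Vᗮ ∘ₗ proj W)
      = Module.finrank ℝ W := by
    rw [← map_add, ← LinearMap.add_comp, proj_add_proj_orthogonal, LinearMap.id_comp, trace_proj]
  linarith [trace_proj_comp_proj_nonneg Vᗮ W]

end Submodule

theorem stmt_6 {E : Type*} [NormedAddCommGroup E] [InnerProductSpace ℝ E]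
    [FiniteDimensional ℝ E] (V W : Submodule ℝ E) :
    0 ≤ LinearMap.trace ℝ E (proj V ∘ₗ proj W) ∧
      LinearMap.trace ℝ E (proj V ∘ₗ proj W)
        ≤ min (Module.finrank ℝ V : ℝ) (Module.finrank ℝ W : ℝ) := by
  refine ⟨V.trace_proj_comp_proj_nonneg W, le_min ?_ (V.trace_proj_comp_proj_le_finrank W)⟩
  rw [LinearMap.trace_comp_comm']
  exact W.trace_proj_comp_proj_le_finrank V
end

section
/- Let G be a finite subgroup of O(n) and t ≥ 1. Assume that every G-invariant polynomial function on ℝ^n of degree at most t which is homogeneous restricts to a constant function on the unit sphere S^{n−1}. Then for every point x₀ ∈ S^{n−1}, the orbit multiset {g·x₀ : g ∈ G} satisfies the quadrature formula (1/|G|)·Σ_{g∈G} f(g·x₀) = ∫_{S^{n−1}} f dσ for every polynomial f of degree at most t, where σ is the normalized rotation-invariant measure on S^{n−1}. -/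
open Matrix Finset MeasureTheory

/-!
Averaging over the orbit is the Reynolds operator `R p = |G|⁻¹ ∑_g p ∘ g`: the left-hand side is
`(R f)(x₀)`. Since `R` is linear and preserves homogeneity, each homogeneous component of `R f`
is a `G`-invariant homogeneous polynomial of degree `≤ t`, hence constant on the sphere, so `R f`
equals a constant `c` there. On the other hand, invariance of `σ` under each `g ∈ G` gives
`∫ f dσ = ∫ R f dσ`, which is `c` because `σ` is a probability measure carried by the sphere.
-/

namespace MvPolynomial

theorem sum_homogeneousComponent_of_totalDegree_le {R σ : Type*} [CommSemiring R]
    {p : MvPolynomial σ R} {t : ℕ} (hp : p.totalDegree ≤ t) :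
    ∑ k ∈ range (t + 1), homogeneousComponent k p = p := by
  rw [← sum_subset (range_subset_range.mpr (Nat.succ_le_succ hp)) fun k _ hk =>
    homogeneousComponent_eq_zero k p (by simp only [mem_range] at hk; omega)]
  exact sum_homogeneousComponent p

section compMatrix

variable {R ι : Type*} [CommSemiring R] [Fintype ι]

noncomputable def compMatrix (A : Matrix ι ι R) : MvPolynomial ι R →ₐ[R] MvPolynomial ι R :=
  bind₁ fun i => ∑ j, C (A i j) * X j

theorem eval_compMatrix (A : Matrix ι ι R) (p : MvPolynomial ι R) (x : ι → R) :
    eval x (compMatrix A p) = eval (A *ᵥ x) p := by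
  refine (eval₂Hom_bind₁ (RingHom.id R) x _ p).trans (congrArg (eval₂Hom _ · p) ?_)
  funext i
  simp [mulVec, dotProduct]

theorem IsHomogeneous.compMatrix (A : Matrix ι ι R) {p : MvPolynomial ι R} {k : ℕ}
    (hp : p.IsHomogeneous k) : (compMatrix A p).IsHomogeneous k := by
  have h := hp.aeval _ fun i =>
    IsHomogeneous.sum univ _ _ fun j _ => isHomogeneous_C_mul_X (A i j) j
  rwa [one_mul] at h

end compMatrix

section reynolds

variable {K ι G : Type*} [Field K] [Fintype ι] [DecidableEq ι] [Group G] [Fintype G]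
  (ρ : G →* Matrix ι ι K)

noncomputable def reynolds : MvPolynomial ι K →ₗ[K] MvPolynomial ι K :=
  (Fintype.card G : K)⁻¹ • ∑ g, (compMatrix (ρ g)).toLinearMap

theorem eval_reynolds (p : MvPolynomial ι K) (x : ι → K) :
    eval x (reynolds ρ p) = (Fintype.card G : K)⁻¹ * ∑ g, eval (ρ g *ᵥ x) p := by
  simp [reynolds, smul_eval, eval_compMatrix]

theorem eval_reynolds_mulVec (p : MvPolynomial ι K) (h : G) (x : ι → K) :
    eval (ρ h *ᵥ x) (reynolds ρ p) = eval x (reynolds ρ p) := by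
  simp only [eval_reynolds, mulVec_mulVec, ← map_mul]
  exact congrArg _ (Fintype.sum_equiv (Equiv.mulRight h) _ _ fun g => rfl)

theorem IsHomogeneous.reynolds {p : MvPolynomial ι K} {k : ℕ} (hp : p.IsHomogeneous k) :
    (reynolds ρ p).IsHomogeneous k := by
  simp only [MvPolynomial.reynolds, LinearMap.smul_apply, LinearMap.sum_apply]
  exact Submodule.smul_mem (homogeneousSubmodule ι K k) _
    (Submodule.sum_mem _ fun g _ => hp.compMatrix (ρ g))

theorem exists_eval_reynolds_eq_of_totalDegree_le {S : Set (ι → K)} {t : ℕ}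
    (hinv : ∀ k ≤ t, ∀ p : MvPolynomial ι K, p.IsHomogeneous k →
      (∀ g x, eval (ρ g *ᵥ x) p = eval x p) → ∃ c, ∀ x ∈ S, eval x p = c)
    {f : MvPolynomial ι K} (hf : f.totalDegree ≤ t) :
    ∃ c, ∀ x ∈ S, eval x (reynolds ρ f) = c := by
  have hcomp : ∀ k ∈ range (t + 1), ∃ c, ∀ x ∈ S,
      eval x (reynolds ρ (homogeneousComponent k f)) = c := fun k hk =>
    hinv k (Nat.lt_succ_iff.mp (mem_range.mp hk)) _
      ((homogeneousComponent_isHomogeneous k f).reynolds ρ) (eval_reynolds_mulVec ρ _)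
  choose! c hc using hcomp
  refine ⟨∑ k ∈ range (t + 1), c k, fun x hx => ?_⟩
  rw [← sum_homogeneousComponent_of_totalDegree_le hf, map_sum, map_sum]
  exact sum_congr rfl fun k hk => hc k hk x hx

end reynolds

end MvPolynomial

theorem Continuous.integrable_of_ae_mem_isCompact {X E : Type*} [TopologicalSpace X] [T2Space X]
    [MeasurableSpace X] [OpensMeasurableSpace X] [NormedAddCommGroup E] {μ : Measure X}
    [IsFiniteMeasure μ] {K : Set X} (hK : IsCompact K) (hμK : ∀ᵐ x ∂μ, x ∈ K) {F : X → E}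
    (hF : Continuous F) : Integrable F μ := by
  rw [← Measure.restrict_eq_self_of_ae_mem hμK]
  exact hF.continuousOn.integrableOn_compact hK

theorem integral_eq_of_average_ae_eq {X ι : Type*} [MeasurableSpace X] {μ : Measure X}
    [IsProbabilityMeasure μ] [Fintype ι] [Nonempty ι] {φ : ι → X → X}
    (hφ : ∀ i, AEMeasurable (φ i) μ) (hmap : ∀ i, μ.map (φ i) = μ) {F : X → ℝ}
    (hF : Integrable F μ) {c : ℝ} (hc : ∀ᵐ x ∂μ, (Fintype.card ι : ℝ)⁻¹ * ∑ i, F (φ i x) = c) :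
    ∫ x, F x ∂μ = c := by
  have hcomp : ∀ i, ∫ x, F (φ i x) ∂μ = ∫ x, F x ∂μ := fun i => by
    rw [← integral_map (hφ i) (by rw [hmap i]; exact hF.aestronglyMeasurable), hmap i]
  have hint : ∀ i, Integrable (fun x => F (φ i x)) μ := fun i =>
    Integrable.comp_aemeasurable (by rw [hmap i]; exact hF) (hφ i)
  calc ∫ x, F x ∂μ = ∫ x, (Fintype.card ι : ℝ)⁻¹ * ∑ i, F (φ i x) ∂μ := by
        rw [integral_const_mul, integral_finsetSum _ fun i _ => hint i]
        simp only [hcomp, sum_const, card_univ, nsmul_eq_mul]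
        field_simp
    _ = c := by rw [integral_congr_ae hc, integral_const, probReal_univ, one_smul]

theorem stmt_12_general (n t : ℕ)
    (G : Subgroup (Matrix.orthogonalGroup (Fin n) ℝ)) [Fintype G]
    (hinv : ∀ k : ℕ, k ≤ t → ∀ f : MvPolynomial (Fin n) ℝ, f.IsHomogeneous k →
      (∀ g : G, ∀ x : Fin n → ℝ,
        MvPolynomial.eval
          (((g : Matrix.orthogonalGroup (Fin n) ℝ) : Matrix (Fin n) (Fin n) ℝ).mulVec x) f
          = MvPolynomial.eval x f) →
      ∃ c : ℝ, ∀ x : EuclideanSpace ℝ (Fin n), ‖x‖ = 1 → MvPolynomial.eval (x : Fin n → ℝ) f = c)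
    (σ : Measure (EuclideanSpace ℝ (Fin n))) [IsProbabilityMeasure σ]
    (hσsphere : σ (Metric.sphere (0 : EuclideanSpace ℝ (Fin n)) 1)ᶜ = 0)
    (hσinv : ∀ g : Matrix (Fin n) (Fin n) ℝ, g ∈ Matrix.orthogonalGroup (Fin n) ℝ →
      σ.map (fun x : EuclideanSpace ℝ (Fin n) => (WithLp.toLp 2 (g.mulVec x) : EuclideanSpace ℝ (Fin n))) = σ)
    (f : MvPolynomial (Fin n) ℝ) (hf : f.totalDegree ≤ t)
    (x₀ : EuclideanSpace ℝ (Fin n)) (hx₀ : ‖x₀‖ = 1) :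
    (1 / (Fintype.card G : ℝ)) * ∑ g : G,
        MvPolynomial.eval
          (((g : Matrix.orthogonalGroup (Fin n) ℝ) : Matrix (Fin n) (Fin n) ℝ).mulVec x₀) f
      = ∫ x, MvPolynomial.eval (x : Fin n → ℝ) f ∂σ := by
  let ρ : G →* Matrix (Fin n) (Fin n) ℝ := (orthogonalGroup (Fin n) ℝ).subtype.comp G.subtype
  obtain ⟨c, hc⟩ := MvPolynomial.exists_eval_reynolds_eq_of_totalDegree_le ρ
    (S := WithLp.toLp 2 ⁻¹' Metric.sphere 0 1)
    (fun k hk p hp hpinv => (hinv k hk p hp hpinv).imp fun c hc x hx =>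
      hc _ (mem_sphere_zero_iff_norm.mp hx)) hf
  have horbit : ∀ x ∈ Metric.sphere (0 : EuclideanSpace ℝ (Fin n)) 1,
      (Fintype.card G : ℝ)⁻¹ * ∑ g : G, MvPolynomial.eval
        (((g : orthogonalGroup (Fin n) ℝ) : Matrix (Fin n) (Fin n) ℝ) *ᵥ x) f = c := fun x hx =>
    (MvPolynomial.eval_reynolds ρ f _).symm.trans (hc _ hx)
  have hsphere : ∀ᵐ x ∂σ, x ∈ Metric.sphere (0 : EuclideanSpace ℝ (Fin n)) 1 :=
    mem_ae_iff.mpr hσsphere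
  have hφ (g : G) : Continuous fun x : EuclideanSpace ℝ (Fin n) => WithLp.toLp 2 (ρ g *ᵥ x) :=
    (Matrix.toEuclideanLin (ρ g)).continuous_of_finiteDimensional
  have hF : Continuous fun x : EuclideanSpace ℝ (Fin n) => MvPolynomial.eval (x : Fin n → ℝ) f :=
    (MvPolynomial.continuous_eval f).comp (PiLp.continuous_ofLp 2 _)
  rw [one_div, horbit x₀ (mem_sphere_zero_iff_norm.mpr hx₀)]
  exact (integral_eq_of_average_ae_eq (fun g => (hφ g).aemeasurable)
    (fun g => hσinv _ (g : orthogonalGroup (Fin n) ℝ).2)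
    (hF.integrable_of_ae_mem_isCompact (isCompact_sphere 0 1) hsphere) (hsphere.mono horbit)).symm

theorem stmt_12 (n t : ℕ) (ht : 1 ≤ t)
    (G : Subgroup (Matrix.orthogonalGroup (Fin n) ℝ)) [Fintype G]
    (hinv : ∀ k : ℕ, k ≤ t → ∀ f : MvPolynomial (Fin n) ℝ, f.IsHomogeneous k →
      (∀ g : G, ∀ x : Fin n → ℝ,
        MvPolynomial.eval
          (((g : Matrix.orthogonalGroup (Fin n) ℝ) : Matrix (Fin n) (Fin n) ℝ).mulVec x) f
          = MvPolynomial.eval x f) →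
      ∃ c : ℝ, ∀ x : EuclideanSpace ℝ (Fin n), ‖x‖ = 1 → MvPolynomial.eval (x : Fin n → ℝ) f = c)
    (σ : Measure (EuclideanSpace ℝ (Fin n))) [IsProbabilityMeasure σ]
    (hσsphere : σ (Metric.sphere (0 : EuclideanSpace ℝ (Fin n)) 1)ᶜ = 0)
    (hσinv : ∀ g : Matrix (Fin n) (Fin n) ℝ, g ∈ Matrix.orthogonalGroup (Fin n) ℝ →
      σ.map (fun x : EuclideanSpace ℝ (Fin n) => (WithLp.toLp 2 (g.mulVec x) : EuclideanSpace ℝ (Fin n))) = σ)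
    (f : MvPolynomial (Fin n) ℝ) (hf : f.totalDegree ≤ t)
    (x₀ : EuclideanSpace ℝ (Fin n)) (hx₀ : ‖x₀‖ = 1) :
    (1 / (Fintype.card G : ℝ)) * ∑ g : G,
        MvPolynomial.eval
          (((g : Matrix.orthogonalGroup (Fin n) ℝ) : Matrix (Fin n) (Fin n) ℝ).mulVec x₀) f
      = ∫ x, MvPolynomial.eval (x : Fin n → ℝ) f ∂σ :=
  stmt_12_general n t G hinv σ hσsphere hσinv f hf x₀ hx₀
end

section
/- Let G be a finite subgroup of O(n) and t ≥ 1. If for every x₀ ∈ S^{n−1} the orbit multiset {g·x₀ : g ∈ G} satisfies (1/|G|)·Σ_{g∈G} f(g·x₀) = ∫_{S^{n−1}} f dσ for all polynomials f of degree at most t, then every homogeneous G-invariant polynomial on ℝ^n of degree at most t is constant on the unit sphere S^{n−1}. -/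
open Matrix Finset MeasureTheory

theorem Fintype.one_div_card_mul_sum_eq_of_forall_eq {ι : Type*} [Fintype ι] [Nonempty ι]
    {u : ι → ℝ} {c : ℝ} (h : ∀ i, u i = c) :
    1 / (Fintype.card ι : ℝ) * ∑ i, u i = c := by
  have hcard : (Fintype.card ι : ℝ) ≠ 0 := by exact_mod_cast Fintype.card_ne_zero
  rw [Finset.sum_congr rfl fun i _ => h i, Finset.sum_const, Finset.card_univ, nsmul_eq_mul,
    ← mul_assoc, one_div_mul_cancel hcard, one_mul]

theorem stmt_13_general (n t : ℕ)
    (G : Subgroup (Matrix.orthogonalGroup (Fin n) ℝ)) [Fintype G]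
    (σ : Measure (EuclideanSpace ℝ (Fin n)))
    (hdesign : ∀ x₀ : EuclideanSpace ℝ (Fin n), ‖x₀‖ = 1 →
      ∀ f : MvPolynomial (Fin n) ℝ, f.totalDegree ≤ t →
        (1 / (Fintype.card G : ℝ)) * ∑ g : G,
            MvPolynomial.eval
              (((g : Matrix.orthogonalGroup (Fin n) ℝ) : Matrix (Fin n) (Fin n) ℝ).mulVec x₀) f
          = ∫ x, MvPolynomial.eval (x : Fin n → ℝ) f ∂σ) :
    ∀ k : ℕ, k ≤ t → ∀ f : MvPolynomial (Fin n) ℝ, f.IsHomogeneous k →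
      (∀ g : G, ∀ x : Fin n → ℝ,
        MvPolynomial.eval
          (((g : Matrix.orthogonalGroup (Fin n) ℝ) : Matrix (Fin n) (Fin n) ℝ).mulVec x) f
          = MvPolynomial.eval x f) →
      ∃ c : ℝ, ∀ x : EuclideanSpace ℝ (Fin n), ‖x‖ = 1 →
        MvPolynomial.eval (x : Fin n → ℝ) f = c := by
  intro k hk f hf hinv
  refine ⟨∫ x, MvPolynomial.eval (x : Fin n → ℝ) f ∂σ, fun x hx => ?_⟩
  rw [← hdesign x hx f (hf.totalDegree_le.trans hk)]
  exact (Fintype.one_div_card_mul_sum_eq_of_forall_eq fun g => hinv g x).symm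

theorem stmt_13 (n t : ℕ) (ht : 1 ≤ t)
    (G : Subgroup (Matrix.orthogonalGroup (Fin n) ℝ)) [Fintype G]
    (σ : Measure (EuclideanSpace ℝ (Fin n))) [IsProbabilityMeasure σ]
    (hσsphere : σ (Metric.sphere (0 : EuclideanSpace ℝ (Fin n)) 1)ᶜ = 0)
    (hσinv : ∀ g : Matrix (Fin n) (Fin n) ℝ, g ∈ Matrix.orthogonalGroup (Fin n) ℝ →
      σ.map (fun x : EuclideanSpace ℝ (Fin n) => (WithLp.toLp 2 (g.mulVec x) : EuclideanSpace ℝ (Fin n))) = σ)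
    (hdesign : ∀ x₀ : EuclideanSpace ℝ (Fin n), ‖x₀‖ = 1 →
      ∀ f : MvPolynomial (Fin n) ℝ, f.totalDegree ≤ t →
        (1 / (Fintype.card G : ℝ)) * ∑ g : G,
            MvPolynomial.eval
              (((g : Matrix.orthogonalGroup (Fin n) ℝ) : Matrix (Fin n) (Fin n) ℝ).mulVec x₀) f
          = ∫ x, MvPolynomial.eval (x : Fin n → ℝ) f ∂σ) :
    ∀ k : ℕ, k ≤ t → ∀ f : MvPolynomial (Fin n) ℝ, f.IsHomogeneous k →
      (∀ g : G, ∀ x : Fin n → ℝ,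
        MvPolynomial.eval
          (((g : Matrix.orthogonalGroup (Fin n) ℝ) : Matrix (Fin n) (Fin n) ℝ).mulVec x) f
          = MvPolynomial.eval x f) →
      ∃ c : ℝ, ∀ x : EuclideanSpace ℝ (Fin n), ‖x‖ = 1 →
        MvPolynomial.eval (x : Fin n → ℝ) f = c :=
  stmt_13_general n t G σ hdesign
end

section
/- Let C be a real symmetric s×s matrix with C·𝟙 = ω·𝟙 for some ω > 0, and suppose C² = c·C + d·J with c > 0, where J is the all-ones matrix and 𝟙 the all-ones vector. Then rank(C) = 1 + (tr(C) − ω)/c. -/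
/-!
Let `E = J / s`, the projection onto `𝟙`. Symmetry and `C 𝟙 = ω 𝟙` give `C E = E C = ω E`;
multiplying `C² = c C + d s E` by `E` forces `d s = ω² - c ω`, and then `P = (C - ω E) / c` is an
idempotent orthogonal to `E` with `C = c P + ω E`. So `C` has the rank of the idempotent `P + E`,
which equals its trace `tr P + 1 = (tr C - ω) / c + 1`.
-/

open Matrix

namespace Matrix

variable {K n : Type*} [Field K] [Fintype n] [DecidableEq n]

theorem IsIdempotentElem.rank_eq_trace {P : Matrix n n K} (hP : IsIdempotentElem P) :
    (P.rank : K) = P.trace := by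
  have h : IsIdempotentElem (toLin' P) := hP.map (toLinAlgEquiv' (R := K) (n := n))
  rw [← trace_toLin'_eq, (LinearMap.IsIdempotentElem.isProj_range _ h).trace, rank, toLin'_apply']

theorem rank_smul_add_smul_of_orthogonal_idempotents {P Q : Matrix n n K} {a b : K}
    (hP : IsIdempotentElem P) (hQ : IsIdempotentElem Q) (hPQ : P * Q = 0) (hQP : Q * P = 0)
    (ha : a ≠ 0) (hb : b ≠ 0) :
    ((a • P + b • Q).rank : K) = P.trace + Q.trace := by
  have hsum : IsIdempotentElem (P + Q) := hP.add hQ (by rw [hPQ, hQP, add_zero])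
  have hfix : (P + Q) * (a • P + b • Q) = a • P + b • Q := by
    simp only [Matrix.add_mul, Matrix.mul_add, Matrix.mul_smul, hP.eq, hQ.eq, hPQ, hQP, add_zero,
      zero_add]
  have hinv : (a • P + b • Q) * (a⁻¹ • P + b⁻¹ • Q) = P + Q := by
    simp only [Matrix.add_mul, Matrix.mul_add, Matrix.smul_mul, Matrix.mul_smul, hP.eq, hQ.eq, hPQ,
      hQP, smul_zero, add_zero, zero_add, smul_smul, inv_mul_cancel₀ ha, inv_mul_cancel₀ hb,
      one_smul]
  have hrank : (a • P + b • Q).rank = (P + Q).rank := le_antisymm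
    (hfix ▸ rank_mul_le_left _ _) (hinv ▸ rank_mul_le_left _ _)
  rw [hrank, hsum.rank_eq_trace, trace_add]

end Matrix

section Algebra

variable {K A : Type*} [Field K] [Ring A] [Algebra K A]

theorem exists_orthogonal_idempotent_of_mul_self_eq {C E : A} {ω c e : K}
    (hE : IsIdempotentElem E) (hE0 : E ≠ 0) (hCE : C * E = ω • E) (hEC : E * C = ω • E)
    (hC : C * C = c • C + e • E) (hc : c ≠ 0) :
    ∃ P : A, IsIdempotentElem P ∧ P * E = 0 ∧ E * P = 0 ∧ C = c • P + ω • E := by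
  have he : e = ω ^ 2 - c * ω := by
    have h : (ω ^ 2 - c * ω - e) • E = 0 := by
      have := congrArg (· * E) hC
      simp only [mul_assoc, hCE, mul_smul_comm, add_mul, smul_mul_assoc, hE.eq] at this
      linear_combination (norm := module) this
    linear_combination -(smul_eq_zero.mp h).resolve_right hE0
  subst he
  refine ⟨c⁻¹ • (C - ω • E), ?_, ?_, ?_, ?_⟩
  · have hsq : (C - ω • E) * (C - ω • E) = c • (C - ω • E) := by
      simp only [sub_mul, mul_sub, smul_mul_assoc, mul_smul_comm, hC, hCE, hEC, hE.eq, smul_smul]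
      module
    simp only [IsIdempotentElem, smul_mul_assoc, mul_smul_comm, hsq, smul_smul]
    field_simp
  · simp only [smul_mul_assoc, sub_mul, hCE, hE.eq, sub_self, smul_zero]
  · simp only [mul_smul_comm, mul_sub, hEC, hE.eq, sub_self, smul_zero]
  · rw [smul_smul, mul_inv_cancel₀ hc, one_smul, sub_add_cancel]

end Algebra

theorem stmt_15 (s : ℕ) (hs : 0 < s) (C J : Matrix (Fin s) (Fin s) ℝ) (hC : C.IsSymm)
    (hJ : ∀ i j, J i j = 1) (ω c d : ℝ) (hω : 0 < ω) (hc : 0 < c)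
    (h1 : C.mulVec ((fun _ => 1) : Fin s → ℝ) = ω • ((fun _ => 1) : Fin s → ℝ))
    (hCsq : C * C = c • C + d • J) :
    (C.rank : ℝ) = 1 + (C.trace - ω) / c := by
  have hJ1 : J = vecMulVec 1 1 := ext fun i j => by simp [hJ, vecMulVec_apply]
  have h1' : C *ᵥ 1 = ω • 1 := h1
  have hCJ : C * J = ω • J := by rw [hJ1, mul_vecMulVec, h1', smul_vecMulVec]
  have hJC : J * C = ω • J := by
    rw [hJ1, vecMulVec_mul, ← hC.eq, vecMul_transpose, h1', vecMulVec_smul]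
  have hJJ : J * J = (s : ℝ) • J := by
    rw [hJ1, vecMulVec_mul_vecMulVec, one_dotProduct_one, Fintype.card_fin, vecMulVec_smul]
  have hs' : (s : ℝ) ≠ 0 := by positivity
  set E := (s : ℝ)⁻¹ • J with hEJ
  have hE : IsIdempotentElem E := by
    rw [IsIdempotentElem, hEJ, smul_mul_smul_comm, hJJ, smul_smul, mul_assoc, inv_mul_cancel₀ hs',
      mul_one]
  have hE0 : E ≠ 0 :=
    smul_ne_zero (inv_ne_zero hs') fun h => by simpa [h] using hJ ⟨0, hs⟩ ⟨0, hs⟩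
  obtain ⟨P, hP, hPE, hEP, hCP⟩ :=
    exists_orthogonal_idempotent_of_mul_self_eq (e := d * s) hE hE0
      (by rw [hEJ, mul_smul_comm, hCJ, smul_comm]) (by rw [hEJ, smul_mul_assoc, hJC, smul_comm])
      (by rw [hCsq, hEJ, smul_smul, mul_assoc, mul_inv_cancel₀ hs', mul_one]) hc.ne'
  have htrE : E.trace = 1 := by
    rw [hEJ, trace_smul, hJ1, trace_vecMulVec, one_dotProduct_one, Fintype.card_fin, smul_eq_mul,
      inv_mul_cancel₀ hs']
  have htrC : C.trace = c * P.trace + ω := by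
    rw [hCP, trace_add, trace_smul, trace_smul, htrE, smul_eq_mul, smul_eq_mul, mul_one]
  rw [htrC, hCP, rank_smul_add_smul_of_orthogonal_idempotents hP hE hPE hEP hc.ne' hω.ne', htrE]
  field_simp
  ring
end
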